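/- Fix Δ ∈ ℤ with Δ ≥ 2. Let G = (V, E) be a finite multigraph of maximum degree at most Δ with interaction φ : E → ℝ satisfying |φ(ε)| ≤ 1 for all ε ∈ E, and let β ∈ ℂ satisfy |β| ≤ 1/(e⁴Δ). Then Z_Ising(G;β) ≠ 0. -/

import Mathlib

/-!
Pin the spins outside a finite set `S` to a configuration `τ` and induct on `S`. The invariant,
required uniformly over all interactions with `|φ| ≤ 1`, is that flipping the pinned spin at any
`v ∉ S` changes the pinned partition function by a relative error of at most `1/5`.
By spin-flip symmetry, flipping `v` is the same as negating the couplings on the at most `Δ`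
edges at `v`. Negating one of them multiplies the pinned sum by `1 + O(|β|)`: if its other
endpoint `u` is pinned, the edge factor is a constant, and otherwise one splits according to the
spin at `u` and uses the invariant for `S \ {u}`. Compounding over the edges at `v` keeps the
error below `1/5`. Finally, splitting according to the spin at some `u ∈ S` writes the pinned
partition function on `S` as a sum of two pinned partition functions on `S \ {u}` that differ
by a flip at `u`, hence lie within relative distance `1/5` of each other, so it cannot vanish.
-/

open scoped Classical

namespace Stmt8

variable {V Eg : Type*}

/-- The spin `±1` associated to a Boolean configuration value. -/
def spin (b : Bool) : ℝ := if b then 1 else -1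

/-- The product `σ_u σ_v` of the spins at the two endpoints of an (unordered) edge. -/
def spinProd (σ : V → Bool) : Sym2 V → ℝ :=
  Sym2.lift ⟨fun u v => spin (σ u) * spin (σ v), fun _ _ => mul_comm _ _⟩

/-- The normalized Ising partition function
`Z_Ising(G;β) = 2^{−|V|} Σ_{σ ∈ {−1,+1}^V} Π_{ε={u,v} ∈ E} e^{−β φ(ε) σ_u σ_v}`. -/
noncomputable def Zising [Fintype V] [Fintype Eg]
    (ends : Eg → Sym2 V) (φ : Eg → ℝ) (β : ℂ) : ℂ :=
  (2 : ℂ) ^ (-(Fintype.card V : ℤ)) *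
    ∑ σ : V → Bool, ∏ e : Eg, Complex.exp (-β * (φ e : ℂ) * (spinProd σ (ends e) : ℝ))

/-- The degree of a vertex `v`: the number of edges containing `v`. -/
noncomputable def degree [Fintype Eg] (ends : Eg → Sym2 V) (v : V) : ℕ :=
  Nat.card {e : Eg // v ∈ ends e}

section Estimates

lemma norm_le_of_norm_sub_le {E : Type*} [SeminormedAddCommGroup E] {a b : E} {ε : ℝ}
    (h : ‖b - a‖ ≤ ε * ‖a‖) : ‖b‖ ≤ (1 + ε) * ‖a‖ := by
  have := norm_le_norm_add_norm_sub' b a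
  linarith

lemma le_norm_add_of_norm_sub_le {E : Type*} [SeminormedAddCommGroup E] [NormedSpace ℝ E]
    {a b : E} {ε : ℝ} (h : ‖b - a‖ ≤ ε * ‖a‖) : (2 - ε) * ‖a‖ ≤ ‖a + b‖ := by
  have htwo : ‖(2 : ℝ) • a‖ ≤ ‖a + b‖ + ‖b - a‖ := by
    rw [two_smul]
    simpa [norm_sub_rev a b] using norm_add_le (a + b) (a - b)
  rw [norm_smul, Real.norm_two] at htwo
  linarith

/-- The constant is `11 / 9 = (2 + 1/5) / (2 - 1/5)`. -/
lemma norm_mul_add_mul_sub_add_le {a b ca cb : ℂ} {δ : ℝ} (hca : ‖ca - 1‖ ≤ δ)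
    (hcb : ‖cb - 1‖ ≤ δ) (hab : ‖b - a‖ ≤ 5⁻¹ * ‖a‖) :
    ‖ca * a + cb * b - (a + b)‖ ≤ 11 / 9 * δ * ‖a + b‖ := by
  have hb := norm_le_of_norm_sub_le hab
  have hsum := le_norm_add_of_norm_sub_le hab
  have hδ : 0 ≤ δ := (norm_nonneg _).trans hca
  calc ‖ca * a + cb * b - (a + b)‖ = ‖(ca - 1) * a + (cb - 1) * b‖ := by ring_nf
    _ ≤ δ * ‖a‖ + δ * ‖b‖ := by
      refine (norm_add_le _ _).trans (add_le_add ?_ ?_) <;> rw [norm_mul] <;> gcongr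
    _ ≤ 11 / 9 * δ * ‖a + b‖ := by nlinarith

lemma norm_sub_le_of_forall_insert {ι E : Type*} [DecidableEq ι] [SeminormedAddCommGroup E]
    (F : Finset ι → E) {A : Finset ι} {q : ℝ} (hq : 0 ≤ q)
    (hF : ∀ T ⊆ A, ∀ e ∈ A, e ∉ T → ‖F (insert e T) - F T‖ ≤ q * ‖F T‖) :
    ‖F A - F ∅‖ ≤ ((1 + q) ^ A.card - 1) * ‖F ∅‖ := by
  suffices ∀ T ⊆ A, ‖F T - F ∅‖ ≤ ((1 + q) ^ T.card - 1) * ‖F ∅‖ from this A subset_rfl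
  intro T
  induction T using Finset.induction_on with
  | empty => simp
  | insert e T he ih =>
    intro hT
    have hTA : T ⊆ A := (Finset.subset_insert e T).trans hT
    have hstep := hF T hTA e (hT (Finset.mem_insert_self e T)) he
    have hprev := ih hTA
    have hFT : ‖F T‖ ≤ (1 + q) ^ T.card * ‖F ∅‖ := by
      simpa using norm_le_of_norm_sub_le hprev
    rw [Finset.card_insert_of_notMem he]
    calc ‖F (insert e T) - F ∅‖ ≤ ‖F (insert e T) - F T‖ + ‖F T - F ∅‖ :=
          norm_sub_le_norm_sub_add_norm_sub _ _ _
      _ ≤ q * ((1 + q) ^ T.card * ‖F ∅‖) + ((1 + q) ^ T.card - 1) * ‖F ∅‖ := by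
          gcongr
          exact hstep.trans (by gcongr)
      _ = ((1 + q) ^ (T.card + 1) - 1) * ‖F ∅‖ := by ring

lemma one_add_pow_le_one_div_one_sub {x : ℝ} {n : ℕ} (hx : 0 ≤ x) (h : n * x < 1) :
    (1 + x) ^ n ≤ 1 / (1 - n * x) :=
  calc (1 + x) ^ n ≤ Real.exp x ^ n := by gcongr; linarith [Real.add_one_le_exp x]
    _ = Real.exp (n * x) := (Real.exp_nat_mul x n).symm
    _ ≤ 1 / (1 - n * x) := Real.exp_bound_div_one_sub_of_interval (by positivity) h

lemma norm_exp_sub_one_le_four_mul {β : ℂ} {t s : ℝ} (hβ : ‖β‖ ≤ 1 / 4) (ht : |t| ≤ 2)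
    (hs : |s| ≤ 1) : ‖Complex.exp (-β * t * s) - 1‖ ≤ 4 * ‖β‖ := by
  have hz : ‖-β * t * s‖ ≤ 2 * ‖β‖ := by
    rw [norm_mul, norm_mul, norm_neg, Complex.norm_real, Complex.norm_real, Real.norm_eq_abs,
      Real.norm_eq_abs]
    nlinarith [norm_nonneg β, abs_nonneg t, abs_nonneg s,
      mul_le_mul ht hs (abs_nonneg s) zero_le_two]
  calc ‖Complex.exp (-β * t * s) - 1‖ ≤ 2 * ‖-β * t * s‖ :=
        Complex.norm_exp_sub_one_le (by linarith)
    _ ≤ 4 * ‖β‖ := by linarith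

end Estimates

noncomputable section

lemma abs_spin (b : Bool) : |spin b| = 1 := by
  cases b <;> simp [spin]

lemma spin_not (b : Bool) : spin (!b) = -spin b := by
  cases b <;> simp [spin]

@[simp]
lemma spinProd_mk (σ : V → Bool) (x y : V) :
    spinProd σ s(x, y) = spin (σ x) * spin (σ y) := rfl

lemma abs_spinProd_le_one (σ : V → Bool) (s : Sym2 V) : |spinProd σ s| ≤ 1 := by
  induction s using Sym2.ind with
  | _ x y => simp [abs_mul, abs_spin]

lemma spinProd_congr {σ τ : V → Bool} {s : Sym2 V} (h : ∀ x ∈ s, σ x = τ x) :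
    spinProd σ s = spinProd τ s := by
  induction s using Sym2.ind with
  | _ x y => simp [h x (Sym2.mem_mk_left x y), h y (Sym2.mem_mk_right x y)]

def flipAt (v : V) (σ : V → Bool) : V → Bool :=
  Function.update σ v (!σ v)

lemma flipAt_involutive (v : V) : Function.Involutive (flipAt v) := by
  intro σ
  ext x
  rcases eq_or_ne x v with rfl | hx <;> simp [flipAt, *]

lemma flipAt_apply_eq_flipAt_apply_iff {v x : V} {σ τ : V → Bool} :
    flipAt v σ x = flipAt v τ x ↔ σ x = τ x := by
  rcases eq_or_ne x v with rfl | hx <;> simp [flipAt, *]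

lemma flipAt_apply_of_ne {v x : V} (hx : x ≠ v) (σ : V → Bool) : flipAt v σ x = σ x :=
  Function.update_of_ne hx _ _

lemma flipAt_apply_self (v : V) (σ : V → Bool) : flipAt v σ v = !σ v := by
  simp [flipAt]

lemma spinProd_flipAt_of_notMem {v : V} {s : Sym2 V} (h : v ∉ s) (σ : V → Bool) :
    spinProd (flipAt v σ) s = spinProd σ s :=
  spinProd_congr fun _ hx => Function.update_of_ne (ne_of_mem_of_not_mem hx h) _ _

lemma spinProd_flipAt_of_mem {v : V} {s : Sym2 V} (hv : v ∈ s) (hs : ¬ s.IsDiag)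
    (σ : V → Bool) : spinProd (flipAt v σ) s = -spinProd σ s := by
  induction s using Sym2.ind with
  | _ x y =>
    have hxy : x ≠ y := by simpa using hs
    rcases Sym2.mem_iff.mp hv with rfl | rfl
    · simp [flipAt, Function.update_of_ne hxy.symm, spin_not]
    · simp [flipAt, Function.update_of_ne hxy, spin_not]

lemma eqOn_compl_erase_iff {S : Finset V} {u : V} {σ τ : V → Bool} :
    Set.EqOn σ τ (↑(S.erase u))ᶜ ↔ Set.EqOn σ τ (↑S)ᶜ ∧ σ u = τ u := by
  simp only [Set.EqOn, Finset.coe_erase, Set.mem_compl_iff, Set.mem_sdiff, Finset.mem_coe,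
    Set.mem_singleton_iff, not_and, not_not]
  constructor
  · intro h
    exact ⟨fun x hx => h fun hx' => absurd hx' hx, h fun _ => rfl⟩
  · rintro ⟨h, hu'⟩ x hx
    by_cases hxS : x ∈ S
    · rw [hx hxS, hu']
    · exact h hxS

lemma eqOn_compl_erase_flipAt_iff {S : Finset V} {u : V} (hu : u ∈ S) {σ τ : V → Bool} :
    Set.EqOn σ (flipAt u τ) (↑(S.erase u))ᶜ ↔ Set.EqOn σ τ (↑S)ᶜ ∧ σ u = !τ u := by
  rw [eqOn_compl_erase_iff, flipAt_apply_self]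
  refine and_congr_left fun _ => forall₂_congr fun x hx => ?_
  rw [flipAt_apply_of_ne (ne_of_mem_of_not_mem hu hx).symm]

def negOn (T : Finset Eg) (φ : Eg → ℝ) : Eg → ℝ :=
  fun e => if e ∈ T then -φ e else φ e

@[simp]
lemma negOn_empty (φ : Eg → ℝ) : negOn ∅ φ = φ := by
  ext e
  simp [negOn]

lemma abs_negOn_le_one {φ : Eg → ℝ} (hφ : ∀ e, |φ e| ≤ 1) (T : Finset Eg) (e : Eg) :
    |negOn T φ e| ≤ 1 := by
  unfold negOn
  split_ifs <;> simp [hφ e]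

lemma negOn_insert {T : Finset Eg} {e : Eg} (he : e ∉ T) (φ : Eg → ℝ) :
    negOn (insert e T) φ = Function.update (negOn T φ) e (-φ e) := by
  ext x
  rcases eq_or_ne x e with rfl | hx <;> simp [negOn, Function.update_of_ne, *]

section Weights

variable [Fintype Eg] (ends : Eg → Sym2 V) (β : ℂ)

def weight (φ : Eg → ℝ) (σ : V → Bool) : ℂ :=
  ∏ e : Eg, Complex.exp (-β * (φ e : ℂ) * (spinProd σ (ends e) : ℝ))

def edgesAt (v : V) : Finset Eg :=
  Finset.univ.filter fun e => v ∈ ends e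

variable {ends β}

lemma card_edgesAt (v : V) : (edgesAt ends v).card = degree ends v := by
  rw [degree, Nat.card_eq_fintype_card, Fintype.card_subtype, edgesAt]

lemma weight_ne_zero (φ : Eg → ℝ) (σ : V → Bool) : weight ends β φ σ ≠ 0 :=
  Finset.prod_ne_zero_iff.mpr fun _ _ => Complex.exp_ne_zero _

lemma weight_update (ψ : Eg → ℝ) (e₀ : Eg) (a : ℝ) (σ : V → Bool) :
    weight ends β (Function.update ψ e₀ a) σ =
      Complex.exp (-β * ((a - ψ e₀ : ℝ) : ℂ) * (spinProd σ (ends e₀) : ℝ)) *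
        weight ends β ψ σ := by
  unfold weight
  rw [← Finset.mul_prod_erase _ _ (Finset.mem_univ e₀),
    ← Finset.mul_prod_erase _ _ (Finset.mem_univ e₀), Function.update_self, ← mul_assoc,
    ← Complex.exp_add]
  congr 1
  · congr 1
    push_cast
    ring
  · refine Finset.prod_congr rfl fun e he => ?_
    rw [Function.update_of_ne (Finset.ne_of_mem_erase he)]

lemma weight_negOn_edgesAt (hloop : ∀ e, ¬ (ends e).IsDiag) (φ : Eg → ℝ) (v : V)
    (σ : V → Bool) : weight ends β (negOn (edgesAt ends v) φ) σ = weight ends β φ (flipAt v σ) := by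
  refine Finset.prod_congr rfl fun e _ => ?_
  by_cases hv : v ∈ ends e
  · simp only [negOn, edgesAt, Finset.mem_filter, Finset.mem_univ, true_and, if_pos hv,
      spinProd_flipAt_of_mem hv (hloop e)]
    push_cast
    ring_nf
  · simp [negOn, edgesAt, hv, spinProd_flipAt_of_notMem hv]

end Weights

section Pinned

variable [Fintype V] [Fintype Eg] {ends : Eg → Sym2 V} {β : ℂ}

variable (ends β) in
def pinnedZ (φ : Eg → ℝ) (S : Finset V) (τ : V → Bool) : ℂ :=
  ∑ σ : V → Bool, if Set.EqOn σ τ (↑S)ᶜ then weight ends β φ σ else 0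

lemma zising_eq_pinnedZ_univ (φ : Eg → ℝ) (τ : V → Bool) :
    Zising ends φ β = (2 : ℂ) ^ (-(Fintype.card V : ℤ)) * pinnedZ ends β φ Finset.univ τ := by
  simp [Zising, pinnedZ, weight]

lemma pinnedZ_empty (φ : Eg → ℝ) (τ : V → Bool) : pinnedZ ends β φ ∅ τ = weight ends β φ τ := by
  simp [pinnedZ, Set.eqOn_univ]

lemma pinnedZ_eq_add {S : Finset V} {u : V} (hu : u ∈ S) (φ : Eg → ℝ) (τ : V → Bool) :
    pinnedZ ends β φ S τ =
      pinnedZ ends β φ (S.erase u) τ + pinnedZ ends β φ (S.erase u) (flipAt u τ) := by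
  rw [pinnedZ, pinnedZ, pinnedZ, ← Finset.sum_add_distrib]
  refine Finset.sum_congr rfl fun σ _ => ?_
  rw [eqOn_compl_erase_iff, eqOn_compl_erase_flipAt_iff hu]
  cases σ u <;> cases τ u <;> simp

lemma pinnedZ_update_of_pinned {S : Finset V} {e₀ : Eg} (hpin : ∀ x ∈ ends e₀, x ∉ S)
    (ψ : Eg → ℝ) (a : ℝ) (τ : V → Bool) :
    pinnedZ ends β (Function.update ψ e₀ a) S τ =
      Complex.exp (-β * ((a - ψ e₀ : ℝ) : ℂ) * (spinProd τ (ends e₀) : ℝ)) *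
        pinnedZ ends β ψ S τ := by
  rw [pinnedZ, pinnedZ, Finset.mul_sum]
  refine Finset.sum_congr rfl fun σ _ => ?_
  split_ifs with hσ
  · rw [weight_update, spinProd_congr fun x hx => hσ (hpin x hx)]
  · rw [mul_zero]

lemma pinnedZ_flipAt (hloop : ∀ e, ¬ (ends e).IsDiag) (φ : Eg → ℝ) (S : Finset V) (v : V)
    (τ : V → Bool) :
    pinnedZ ends β φ S (flipAt v τ) = pinnedZ ends β (negOn (edgesAt ends v) φ) S τ := by
  rw [pinnedZ, ← Equiv.sum_comp (flipAt_involutive v).toPerm, pinnedZ]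
  refine Finset.sum_congr rfl fun σ _ => ?_
  simp only [Function.Involutive.coe_toPerm, weight_negOn_edgesAt hloop]
  congr 1
  exact propext (forall₂_congr fun x _ => flipAt_apply_eq_flipAt_apply_iff)

end Pinned

section Induction

variable [Fintype V] [Fintype Eg] {ends : Eg → Sym2 V} {β : ℂ}

variable (ends β) in
def RatioBounded (S : Finset V) : Prop :=
  ∀ φ : Eg → ℝ, (∀ e, |φ e| ≤ 1) → ∀ τ : V → Bool, ∀ v ∉ S,
    ‖pinnedZ ends β φ S (flipAt v τ) - pinnedZ ends β φ S τ‖ ≤ 5⁻¹ * ‖pinnedZ ends β φ S τ‖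

lemma pinnedZ_ne_zero (h : ∀ S, RatioBounded ends β S) {φ : Eg → ℝ} (hφ : ∀ e, |φ e| ≤ 1)
    (S : Finset V) (τ : V → Bool) : pinnedZ ends β φ S τ ≠ 0 := by
  induction S using Finset.induction_on generalizing τ with
  | empty => rw [pinnedZ_empty]; exact weight_ne_zero φ τ
  | insert u S hu ih =>
    have hsplit := pinnedZ_eq_add (ends := ends) (β := β) (Finset.mem_insert_self u S) φ τ
    rw [Finset.erase_insert hu] at hsplit
    have hlow := le_norm_add_of_norm_sub_le (h S φ hφ τ u hu)
    have hpos := norm_pos_iff.mpr (ih τ)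
    rw [hsplit, ← norm_pos_iff]
    linarith

lemma norm_pinnedZ_update_sub_le {S : Finset V} (ih : ∀ u ∈ S, RatioBounded ends β (S.erase u))
    (hβ : ‖β‖ ≤ 1 / 4) {ψ : Eg → ℝ} (hψ : ∀ e, |ψ e| ≤ 1) {e₀ : Eg} {a : ℝ} (ha : |a| ≤ 1)
    {v : V} (hv : v ∉ S) (he₀ : v ∈ ends e₀) (τ : V → Bool) :
    ‖pinnedZ ends β (Function.update ψ e₀ a) S τ - pinnedZ ends β ψ S τ‖ ≤
      44 / 9 * ‖β‖ * ‖pinnedZ ends β ψ S τ‖ := by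
  have hc (σ : V → Bool) :
      ‖Complex.exp (-β * ((a - ψ e₀ : ℝ) : ℂ) * (spinProd σ (ends e₀) : ℝ)) - 1‖ ≤ 4 * ‖β‖ :=
    norm_exp_sub_one_le_four_mul hβ ((abs_sub _ _).trans (by linarith [hψ e₀]))
      (abs_spinProd_le_one σ _)
  set u := Sym2.Mem.other he₀
  have hends (x : V) (hx : x ∈ ends e₀) : x = v ∨ x = u :=
    Sym2.mem_iff.mp (by rwa [Sym2.other_spec he₀])
  by_cases hu : u ∈ S
  · have hpin (x : V) (hx : x ∈ ends e₀) : x ∉ S.erase u := by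
      rcases hends x hx with rfl | rfl
      · exact fun h => hv (Finset.mem_of_mem_erase h)
      · exact Finset.notMem_erase _ _
    rw [pinnedZ_eq_add hu, pinnedZ_eq_add hu, pinnedZ_update_of_pinned hpin,
      pinnedZ_update_of_pinned hpin]
    have := norm_mul_add_mul_sub_add_le (hc τ) (hc (flipAt u τ))
      (ih u hu ψ hψ τ u (Finset.notMem_erase u S))
    linarith
  · have hpin (x : V) (hx : x ∈ ends e₀) : x ∉ S := by
      rcases hends x hx with rfl | rfl <;> assumption
    rw [pinnedZ_update_of_pinned hpin, ← sub_one_mul, norm_mul]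
    have := mul_le_mul_of_nonneg_right (hc τ) (norm_nonneg (pinnedZ ends β ψ S τ))
    nlinarith [norm_nonneg β, norm_nonneg (pinnedZ ends β ψ S τ)]

lemma RatioBounded.of_erase (hloop : ∀ e, ¬ (ends e).IsDiag)
    (hβ : ∀ v, (degree ends v : ℝ) * ‖β‖ ≤ 1 / 50) {S : Finset V}
    (ih : ∀ u ∈ S, RatioBounded ends β (S.erase u)) : RatioBounded ends β S := by
  intro φ hφ τ v hv
  set F : Finset Eg → ℂ := fun T => pinnedZ ends β (negOn T φ) S τ
  have hq : 0 ≤ 44 / 9 * ‖β‖ := by positivity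
  have hstep : ∀ T ⊆ edgesAt ends v, ∀ e ∈ edgesAt ends v, e ∉ T →
      ‖F (insert e T) - F T‖ ≤ 44 / 9 * ‖β‖ * ‖F T‖ := by
    intro T _ e he heT
    have hdeg : (1 : ℝ) ≤ degree ends v := by
      exact_mod_cast card_edgesAt (ends := ends) v ▸ Finset.card_pos.mpr ⟨e, he⟩
    have hβ' : ‖β‖ ≤ 1 / 4 := by nlinarith [hβ v, norm_nonneg β]
    simp only [F, negOn_insert heT]
    exact norm_pinnedZ_update_sub_le ih hβ' (abs_negOn_le_one hφ T)
      (by rw [abs_neg]; exact hφ e) hv (Finset.mem_filter.mp he).2 τ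
  have hsmall : ((edgesAt ends v).card : ℝ) * (44 / 9 * ‖β‖) ≤ 44 / 450 := by
    rw [card_edgesAt]
    nlinarith [hβ v]
  have hpow : (1 + 44 / 9 * ‖β‖) ^ (edgesAt ends v).card - 1 ≤ 5⁻¹ := by
    have := one_add_pow_le_one_div_one_sub (n := (edgesAt ends v).card) hq (by linarith)
    have : 1 / (1 - (edgesAt ends v).card * (44 / 9 * ‖β‖)) ≤ 6 / 5 := by
      rw [div_le_iff₀ (by linarith)]
      linarith
    linarith
  have htel := norm_sub_le_of_forall_insert F hq hstep
  simp only [F, negOn_empty] at htel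
  rw [pinnedZ_flipAt hloop]
  exact htel.trans (mul_le_mul_of_nonneg_right hpow (norm_nonneg _))

lemma ratioBounded (hloop : ∀ e, ¬ (ends e).IsDiag)
    (hβ : ∀ v, (degree ends v : ℝ) * ‖β‖ ≤ 1 / 50) (S : Finset V) : RatioBounded ends β S := by
  induction S using Finset.strongInduction with
  | H S ih => exact RatioBounded.of_erase hloop hβ fun u hu => ih _ (Finset.erase_ssubset hu)

end Induction

end

theorem ising_partition_function_ne_zero_general [Fintype V] [Fintype Eg]
    (Δ : ℤ)
    (ends : Eg → Sym2 V) (hloop : ∀ e : Eg, ¬ (ends e).IsDiag)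
    (hdeg : ∀ v : V, (degree ends v : ℤ) ≤ Δ)
    (φ : Eg → ℝ) (hφ : ∀ e : Eg, |φ e| ≤ 1)
    (β : ℂ) (hβ : ‖β‖ ≤ 1 / (Real.exp 1 ^ 4 * Δ)) :
    Zising ends φ β ≠ 0 := by
  have he4 : (50 : ℝ) ≤ Real.exp 1 ^ 4 := by
    have h := Real.exp_one_gt_d9
    have : (2.7 : ℝ) ^ 4 ≤ Real.exp 1 ^ 4 := by gcongr; linarith
    linarith
  have hΔβ : (Δ : ℝ) * ‖β‖ ≤ 1 / 50 := by
    rcases le_or_gt Δ 0 with hΔ | hΔ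
    · have : (Δ : ℝ) ≤ 0 := by exact_mod_cast hΔ
      nlinarith [norm_nonneg β]
    · have hpos : (0 : ℝ) < Real.exp 1 ^ 4 * Δ := by positivity
      rw [le_div_iff₀ hpos] at hβ
      nlinarith [norm_nonneg β]
  have hdegβ (v : V) : (degree ends v : ℝ) * ‖β‖ ≤ 1 / 50 :=
    (mul_le_mul_of_nonneg_right (by exact_mod_cast hdeg v) (norm_nonneg β)).trans hΔβ
  rw [zising_eq_pinnedZ_univ φ (fun _ => true)]
  exact mul_ne_zero (zpow_ne_zero _ two_ne_zero)
    (pinnedZ_ne_zero (ratioBounded hloop hdegβ) hφ _ _)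

/-- **Zero-freeness of the Ising partition function at high temperature.**
If `G` is a multigraph of maximum degree at most `Δ` (with `Δ ≥ 2`), the interaction
satisfies `|φ(ε)| ≤ 1` for all edges, and `|β| ≤ 1/(e⁴Δ)`, then `Z_Ising(G;β) ≠ 0`. -/
theorem ising_partition_function_ne_zero [Fintype V] [Fintype Eg]
    (Δ : ℤ) (hΔ : 2 ≤ Δ)
    (ends : Eg → Sym2 V) (hloop : ∀ e : Eg, ¬ (ends e).IsDiag)
    (hdeg : ∀ v : V, (degree ends v : ℤ) ≤ Δ)
    (φ : Eg → ℝ) (hφ : ∀ e : Eg, |φ e| ≤ 1)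
    (β : ℂ) (hβ : ‖β‖ ≤ 1 / (Real.exp 1 ^ 4 * Δ)) :
    Zising ends φ β ≠ 0 :=
  ising_partition_function_ne_zero_general Δ ends hloop hdeg φ hφ β hβ

end Stmt8
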